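/- For every ν ∈ (-1, 1), the complex-valued function U_ν(Z) = √(1-ν²)[√(1-ν) cosh(√(1-ν²) Z) - i√(1+ν) sinh(√(1-ν²) Z)] / (√2 [cosh(2√(1-ν²) Z) - ν]) satisfies the ODE i U_ν'(Z) + ν U_ν(Z) + conj(U_ν(Z)) - 4 |U_ν(Z)|² U_ν(Z) = 0 for all Z ∈ ℝ. -/

import Mathlib

open Real Complex

/-- The explicit 1D gap-soliton family `Uν` of the reduced semi-Dirac equation. -/
noncomputable def solitonU (ν Z : ℝ) : ℂ :=
  (Real.sqrt (1 - ν^2) *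
      ((Real.sqrt (1 - ν) * Real.cosh (Real.sqrt (1 - ν^2) * Z) : ℝ)
        - Complex.I * (Real.sqrt (1 + ν) * Real.sinh (Real.sqrt (1 - ν^2) * Z) : ℝ))) /
    ((Real.sqrt 2 * (Real.cosh (2 * Real.sqrt (1 - ν^2) * Z) - ν) : ℝ))

/-!
With `a = √(1 - ν)`, `b = √(1 + ν)` and `s = √(1 - ν²) = a b`, the soliton is
`U = s (a cosh θ - i b sinh θ) / (√2 (cosh 2θ - ν))` with `θ = s Z`. Since `a² + b² = 2` and
`b² - a² = 2ν`, the squared modulus of the numerator is `a² cosh² θ + b² sinh² θ = cosh 2θ - ν`,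
so `|U|² = s² / (2 (cosh 2θ - ν))`. The cubic term thus has the same denominator as the others,
and the ODE becomes a polynomial identity in `cosh θ`, `sinh θ`, `a`, `b` modulo
`cosh² θ - sinh² θ = 1`, `a² = 1 - ν`, `b² = 1 + ν`.
-/

/-- `solitonU ν` is `gapSoliton √(1 - ν²) √(1 - ν) √(1 + ν) ν`. -/
noncomputable def gapSoliton (s a b ν Z : ℝ) : ℂ :=
  s * ((a * Real.cosh (s * Z) : ℝ) - I * (b * Real.sinh (s * Z) : ℝ)) /
    ((√2 * (Real.cosh (2 * s * Z) - ν) : ℝ))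

theorem sq_norm_ofReal_sub_I_mul (x y : ℝ) : ‖(x : ℂ) - I * y‖ ^ 2 = x ^ 2 + y ^ 2 := by
  rw [Complex.sq_norm, ← neg_sq y, ← normSq_add_mul_I x (-y)]
  congr 1
  push_cast
  ring

theorem cosh_sub_pos {ν : ℝ} (hν : ν < 1) (x : ℝ) : 0 < Real.cosh x - ν :=
  sub_pos.2 (hν.trans_le (one_le_cosh x))

section

variable {s a b ν : ℝ}

theorem cosh_two_mul_sub_eq (ha : a ^ 2 = 1 - ν) (hb : b ^ 2 = 1 + ν) (x : ℝ) :
    Real.cosh (2 * x) - ν = (a * Real.cosh x) ^ 2 + (b * Real.sinh x) ^ 2 := by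
  rw [Real.cosh_two_mul]
  linear_combination (-Real.cosh x ^ 2) * ha - Real.sinh x ^ 2 * hb + ν * Real.cosh_sq x

theorem sq_norm_gapSoliton (ha : a ^ 2 = 1 - ν) (hb : b ^ 2 = 1 + ν) (Z : ℝ) :
    ‖gapSoliton s a b ν Z‖ ^ 2 = s ^ 2 / (2 * (Real.cosh (2 * s * Z) - ν)) := by
  have hnum : ‖((a * Real.cosh (s * Z) : ℝ) : ℂ) - I * (b * Real.sinh (s * Z) : ℝ)‖ ^ 2 =
      Real.cosh (2 * s * Z) - ν := by
    rw [sq_norm_ofReal_sub_I_mul, mul_assoc, cosh_two_mul_sub_eq ha hb]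
  rw [gapSoliton, norm_div, norm_mul, div_pow, mul_pow, hnum, Complex.norm_real, Real.norm_eq_abs,
    Complex.norm_real, Real.norm_eq_abs, sq_abs, sq_abs, mul_pow, Real.sq_sqrt zero_le_two]
  rcases eq_or_ne (Real.cosh (2 * s * Z) - ν) 0 with hD | hD
  · simp [hD]
  · field_simp

theorem hasDerivAt_gapSoliton (hν : ν < 1) (Z : ℝ) :
    HasDerivAt (gapSoliton s a b ν)
      (s ^ 2 * ((((a * Real.sinh (s * Z) : ℝ) - I * (b * Real.cosh (s * Z) : ℝ)) *
            (Real.cosh (2 * s * Z) - ν : ℝ) -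
          ((a * Real.cosh (s * Z) : ℝ) - I * (b * Real.sinh (s * Z) : ℝ)) *
            (2 * Real.sinh (2 * s * Z) : ℝ)) /
        (√2 * (Real.cosh (2 * s * Z) - ν) ^ 2 : ℝ))) Z := by
  have hlin (k : ℝ) : HasDerivAt (fun z : ℝ => k * z) k Z := by
    simpa using (hasDerivAt_id Z).const_mul k
  have hnum : HasDerivAt
      (fun z : ℝ => ((a * Real.cosh (s * z) : ℝ) : ℂ) - I * (b * Real.sinh (s * z) : ℝ))
      (((a * (Real.sinh (s * Z) * s) : ℝ) : ℂ) - I * (b * (Real.cosh (s * Z) * s) : ℝ)) Z :=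
    ((hlin s).cosh.const_mul a).ofReal_comp.sub (((hlin s).sinh.const_mul b).ofReal_comp.const_mul I)
  have hden : HasDerivAt (fun z : ℝ => ((√2 * (Real.cosh (2 * s * z) - ν) : ℝ) : ℂ))
      ((√2 * (Real.sinh (2 * s * Z) * (2 * s)) : ℝ) : ℂ) Z :=
    (((hlin (2 * s)).cosh.sub_const ν).const_mul √2).ofReal_comp
  have hD := cosh_sub_pos hν (2 * s * Z)
  refine ((hnum.const_mul (s : ℂ)).div hden (ofReal_ne_zero.2 (by positivity))).congr_deriv ?_
  push_cast
  field_simp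

theorem gapSoliton_solves_ode (ha : a ^ 2 = 1 - ν) (hb : b ^ 2 = 1 + ν) (hs : s = a * b)
    (hν : ν < 1) (Z : ℝ) :
    I * deriv (gapSoliton s a b ν) Z + (ν : ℂ) * gapSoliton s a b ν Z
      + (starRingEnd ℂ) (gapSoliton s a b ν Z)
      - 4 * (‖gapSoliton s a b ν Z‖ ^ 2 : ℝ) * gapSoliton s a b ν Z = 0 := by
  have hD₀ := cosh_sub_pos hν (2 * (s * Z))
  rw [(hasDerivAt_gapSoliton hν Z).deriv, sq_norm_gapSoliton ha hb, gapSoliton, mul_assoc,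
    Real.sinh_two_mul]
  rw [Real.cosh_two_mul] at hD₀ ⊢
  subst hs
  set c := Real.cosh (a * b * Z)
  set h := Real.sinh (a * b * Z)
  have hD : (c : ℂ) ^ 2 + h ^ 2 - ν ≠ 0 := by exact_mod_cast hD₀.ne'
  have hc : (c : ℂ) ^ 2 - h ^ 2 = 1 := by exact_mod_cast sub_eq_of_eq_add' (Real.cosh_sq _)
  have ha' : (a : ℂ) ^ 2 = 1 - ν := by exact_mod_cast ha
  have hb' : (b : ℂ) ^ 2 = 1 + ν := by exact_mod_cast hb
  simp only [map_div₀, map_mul, map_sub, Complex.conj_ofReal, Complex.conj_I]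
  push_cast
  field_simp
  linear_combination 2 * a * b * (2 * a * b * (b * c - I * a * h) * hc
    - (2 * a * b ^ 2 * c + I * b * h * (c ^ 2 + h ^ 2 - ν)) * ha'
    - (a * c * (c ^ 2 + h ^ 2 - ν) - 2 * I * a ^ 2 * b * h) * hb'
    + a * b ^ 2 * c * (4 * h ^ 2 - (c ^ 2 + h ^ 2 - ν)) * I_sq)

end

/-- For every ν ∈ (-1,1), `Uν` satisfies i U' + ν U + conj U - 4|U|²U = 0. -/
theorem solitonU_solves_ode (ν : ℝ) (hν : ν ∈ Set.Ioo (-1 : ℝ) 1) (Z : ℝ) :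
    Complex.I * deriv (solitonU ν) Z + (ν : ℂ) * solitonU ν Z
      + (starRingEnd ℂ) (solitonU ν Z)
      - 4 * (‖solitonU ν Z‖^2 : ℝ) * solitonU ν Z = 0 := by
  obtain ⟨hν₁, hν₂⟩ := hν
  have hs : √(1 - ν ^ 2) = √(1 - ν) * √(1 + ν) := by
    rw [← Real.sqrt_mul (by linarith)]
    ring_nf
  exact gapSoliton_solves_ode (Real.sq_sqrt (by linarith)) (Real.sq_sqrt (by linarith)) hs hν₂ Z
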